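/- arXiv:2412.00709 — 4 statements merged into one kernel-verified Lean document; each statement's English description precedes it below -/
import Mathlib

section
/- Let N' ⊆ N be two lattices (free abelian groups of finite rank with N' a subgroup of N), let σ ⊆ N_ℝ and σ' ⊆ N'_ℝ be cones of full dimension in their respective real vector spaces, with σ' ⊆ σ and interior_{N'_ℝ}(σ') ⊆ interior_{N_ℝ}(σ). Then for any D ∈ N: (a) the set N' ∩ (D + (σ ∩ N)) is nonempty, and (b) there exists D' ∈ N' with D' + σ' ⊆ D + σ. -/
open Pointwise


/-- The embedding of the lattice `N = ℤ^ρ` into `N_ℝ = ℝ^ρ`. -/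
def latCoe {ρ : ℕ} (z : Fin ρ → ℤ) : Fin ρ → ℝ := fun i => (z i : ℝ)

lemma latCoe_add {ρ : ℕ} (a b : Fin ρ → ℤ) : latCoe (a + b) = latCoe a + latCoe b := by
  funext i; simp [latCoe]

lemma latCoe_zsmul {ρ : ℕ} (c : ℤ) (a : Fin ρ → ℤ) :
    latCoe (c • a) = (c : ℝ) • latCoe a := by
  funext i; simp [latCoe]

lemma latCoe_sum {ρ n : ℕ} (z : Fin n → (Fin ρ → ℤ)) :
    latCoe (∑ i, z i) = ∑ i, latCoe (z i) := by
  funext j; simp [latCoe]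

/-- Let `Λ' ⊆ ℤ^ρ` be a sublattice, `V = Λ' ⊗ ℝ ⊆ ℝ^ρ` its real
span, `σ ⊆ ℝ^ρ` a full-dimensional cone and `σ' ⊆ V` a cone of full dimension
in `V` (nonempty interior relative to `V`), with `σ' ⊆ σ` and the relative
interior of `σ'` contained in the interior of `σ`.  Then for any `D ∈ ℤ^ρ`:
(a) `Λ' ∩ (D + (σ ∩ ℤ^ρ))` is nonempty, and
(b) there is `D' ∈ Λ'` with `D' + σ' ⊆ D + σ`. -/
theorem stmt_1 (ρ : ℕ) (Λ' : AddSubgroup (Fin ρ → ℤ))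
    (V : Submodule ℝ (Fin ρ → ℝ))
    (hV : V = Submodule.span ℝ (latCoe '' (Λ' : Set (Fin ρ → ℤ))))
    (σ : Set (Fin ρ → ℝ)) (σ' : Set (Fin ρ → ℝ))
    (hσconv : Convex ℝ σ) (hσcone : ∀ c : ℝ, 0 < c → ∀ x ∈ σ, c • x ∈ σ)
    (hσfull : (interior σ).Nonempty)
    (hσ'conv : Convex ℝ σ') (hσ'cone : ∀ c : ℝ, 0 < c → ∀ x ∈ σ', c • x ∈ σ')
    (hσ'V : σ' ⊆ (V : Set (Fin ρ → ℝ)))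
    (hσ'full : (interior ((Subtype.val : V → (Fin ρ → ℝ)) ⁻¹' σ')).Nonempty)
    (hsub : σ' ⊆ σ)
    (hintsub : Subtype.val '' interior ((Subtype.val : V → (Fin ρ → ℝ)) ⁻¹' σ')
        ⊆ interior σ) :
    ∀ D : Fin ρ → ℤ,
      (∃ z ∈ Λ', latCoe z - latCoe D ∈ σ) ∧
      (∃ D' ∈ Λ', ∀ x ∈ σ', latCoe D' + x - latCoe D ∈ σ) := by
  classical
  -- σ is closed under addition
  have hadd : ∀ x ∈ σ, ∀ y ∈ σ, x + y ∈ σ := by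
    intro x hx y hy
    have h2 : (1/2 : ℝ) • x + (1/2 : ℝ) • y ∈ σ :=
      hσconv hx hy (by norm_num) (by norm_num) (by norm_num)
    have := hσcone 2 (by norm_num) _ h2
    simpa [smul_add, smul_smul] using this
  -- scaling invariance of the relative interior of σ'
  have hscale : ∀ c : ℝ, 0 < c →
      ∀ u ∈ interior ((Subtype.val : V → (Fin ρ → ℝ)) ⁻¹' σ'),
        c • u ∈ interior ((Subtype.val : V → (Fin ρ → ℝ)) ⁻¹' σ') := by
    intro c hc u hu
    set s : Set V := (Subtype.val : V → (Fin ρ → ℝ)) ⁻¹' σ'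
    have hcs : c • s ⊆ s := by
      rintro _ ⟨w, hw, rfl⟩
      exact hσ'cone c hc _ hw
    have : c • u ∈ c • interior s := ⟨u, hu, rfl⟩
    rw [← interior_smul₀ hc.ne' s] at this
    exact interior_mono hcs this
  -- find a lattice point of Λ' inside interior σ
  obtain ⟨u, hu⟩ := hσ'full
  have huV : (u : Fin ρ → ℝ) ∈ Submodule.span ℝ (latCoe '' (Λ' : Set (Fin ρ → ℤ))) := by
    rw [← hV]; exact u.2
  obtain ⟨n, f, g, hfg⟩ := Submodule.mem_span_set'.mp huV
  -- choose lattice preimages of g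
  have hg : ∀ i : Fin n, ∃ z : Fin ρ → ℤ, z ∈ Λ' ∧ latCoe z = (g i : Fin ρ → ℝ) := by
    intro i
    obtain ⟨z, hz, hz2⟩ := (g i).2
    exact ⟨z, hz, hz2⟩
  choose z hzΛ hzc using hg
  -- each latCoe (z i) belongs to V
  have hzV : ∀ i, latCoe (z i) ∈ V := by
    intro i
    rw [hV]
    exact Submodule.subset_span ⟨z i, hzΛ i, rfl⟩
  -- the continuous combination map into V
  set G : (Fin n → ℝ) → V := fun c =>
    ⟨∑ i, c i • latCoe (z i), Submodule.sum_mem _ fun i _ => Submodule.smul_mem _ _ (hzV i)⟩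
    with hG
  have hGcont : Continuous G := by
    apply Continuous.subtype_mk
    exact continuous_finset_sum _ fun i _ => (continuous_apply i).smul continuous_const
  have hGf : G f = u := by
    apply Subtype.ext
    simp only [hG]
    rw [← hfg]
    exact Finset.sum_congr rfl fun i _ => by rw [hzc i]
  -- G ⁻¹' (interior relσ') is open and contains f
  set U : Set V := interior ((Subtype.val : V → (Fin ρ → ℝ)) ⁻¹' σ') with hU
  have hopen : IsOpen (G ⁻¹' U) := (isOpen_interior).preimage hGcont
  have hfmem : f ∈ G ⁻¹' U := by simp [Set.mem_preimage, hGf]; exact hu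
  -- rational (single denominator) approximation
  obtain ⟨ε, hε, hball⟩ := Metric.isOpen_iff.mp hopen f hfmem
  obtain ⟨k, hk⟩ := exists_nat_one_div_lt hε
  set K : ℝ := (k : ℝ) + 1 with hK
  have hKpos : (0 : ℝ) < K := by positivity
  set a : Fin n → ℤ := fun i => round (K * f i) with ha
  set c : Fin n → ℝ := fun i => (a i : ℝ) / K with hc
  have hcball : c ∈ Metric.ball f ε := by
    rcases Nat.eq_zero_or_pos n with hn | hn
    · subst hn
      simp [Metric.ball, dist_pi_lt_iff hε]
    have : dist c f < ε := by
      rw [dist_pi_lt_iff hε]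
      intro i
      have h1 : dist (c i) (f i) = |(a i : ℝ) - K * f i| / K := by
        rw [Real.dist_eq,
          show c i - f i = ((a i : ℝ) - K * f i) / K by simp only [hc]; field_simp,
          abs_div, abs_of_pos hKpos]
      have h2 : |(a i : ℝ) - K * f i| ≤ 1 / 2 := by
        rw [ha]
        have := abs_sub_round (K * f i)
        rwa [abs_sub_comm] at this
      calc dist (c i) (f i) = |(a i : ℝ) - K * f i| / K := h1
        _ ≤ (1/2) / K := by gcongr
        _ < 1 / K := by
            rw [div_lt_div_iff₀ hKpos hKpos]; nlinarith
        _ < ε := by rw [hK]; exact hk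
    exact this
  have hGc : G c ∈ U := hball hcball
  -- scale by K to clear denominators
  have hKGc : K • G c ∈ U := hscale K hKpos _ hGc
  -- identify K • G c with a lattice point
  set z₀ : Fin ρ → ℤ := ∑ i, a i • z i with hz₀
  have hz₀Λ : z₀ ∈ Λ' := AddSubgroup.sum_mem _ fun i _ => AddSubgroup.zsmul_mem _ (hzΛ i) _
  have hval : ((K • G c : V) : Fin ρ → ℝ) = latCoe z₀ := by
    have : ((K • G c : V) : Fin ρ → ℝ) = K • ∑ i, c i • latCoe (z i) := rfl
    rw [this, Finset.smul_sum, hz₀, latCoe_sum]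
    refine Finset.sum_congr rfl fun i _ => ?_
    rw [latCoe_zsmul, smul_smul, hc, mul_div_cancel₀ _ hKpos.ne']
  have hLint : latCoe z₀ ∈ interior σ := by
    rw [← hval]
    exact hintsub ⟨K • G c, hKGc, rfl⟩
  set L : Fin ρ → ℝ := latCoe z₀ with hL
  -- absorbing lemma: for any v, v + m • L ∈ σ for some m ≥ 1
  have habs : ∀ v : Fin ρ → ℝ, ∃ m : ℕ, 0 < m ∧ v + (m : ℝ) • L ∈ σ := by
    intro v
    have hcont : Continuous fun t : ℝ => L + t • v :=
      continuous_const.add (continuous_id.smul continuous_const)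
    have hopen2 : IsOpen ((fun t : ℝ => L + t • v) ⁻¹' interior σ) :=
      isOpen_interior.preimage hcont
    have h0 : (0 : ℝ) ∈ (fun t : ℝ => L + t • v) ⁻¹' interior σ := by
      simp [hLint]
    obtain ⟨δ, hδ, hballδ⟩ := Metric.isOpen_iff.mp hopen2 0 h0
    obtain ⟨m, hm⟩ := exists_nat_one_div_lt hδ
    refine ⟨m + 1, Nat.succ_pos m, ?_⟩
    have hmem : L + (1 / ((m : ℝ) + 1)) • v ∈ interior σ := by
      apply hballδ
      simp only [Metric.mem_ball, Real.dist_eq, sub_zero]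
      rw [abs_of_pos (by positivity)]
      exact hm
    have hmpos : (0 : ℝ) < (m : ℝ) + 1 := by positivity
    have := hσcone ((m : ℝ) + 1) hmpos _ (interior_subset hmem)
    rw [smul_add, smul_smul, mul_one_div, div_self hmpos.ne'] at this
    rw [one_smul] at this
    have heq : ((m : ℝ) + 1) • L + v = v + (((m + 1 : ℕ) : ℝ)) • L := by
      push_cast; abel
    rwa [heq] at this
  -- conclude
  intro D
  obtain ⟨m, hm, hmem⟩ := habs (-latCoe D)
  refine ⟨⟨(m : ℤ) • z₀, AddSubgroup.zsmul_mem _ hz₀Λ _, ?_⟩,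
    ⟨(m : ℤ) • z₀, AddSubgroup.zsmul_mem _ hz₀Λ _, ?_⟩⟩
  · have : latCoe ((m : ℤ) • z₀) - latCoe D = -latCoe D + (m : ℝ) • L := by
      rw [latCoe_zsmul]; push_cast; rw [← hL]; abel
    rw [this]; exact hmem
  · intro x hx
    have h1 : latCoe ((m : ℤ) • z₀) + x - latCoe D
        = (-latCoe D + (m : ℝ) • L) + x := by
      rw [latCoe_zsmul]; push_cast; rw [← hL]; abel
    rw [h1]
    exact hadd _ hmem _ (hsub hx)
end

section
/- Let σ ⊆ ℝ^ρ be a convex cone, let e_1, …, e_ρ be a basis of the lattice ℤ^ρ ⊆ ℝ^ρ, and let C be the cube with vertices ±e_1 ± ⋯ ± e_ρ. Suppose D', D'' ∈ ℝ^ρ are such that for every vertex v = ±e_1 ± ⋯ ± e_ρ of C one has D' − D'' + v ∈ σ. Then the intersection (D' − σ) ∩ (D'' + σ) contains a lattice point of ℤ^ρ. -/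
open Finset

lemma latCoe_sum_zsmul {ρ : ℕ} {ι : Type*} (s : Finset ι) (a : ι → ℤ) (z : ι → Fin ρ → ℤ) :
    latCoe (∑ i ∈ s, a i • z i) = ∑ i ∈ s, (a i : ℝ) • latCoe (z i) := by
  funext j
  simp [latCoe, Finset.sum_apply]

lemma span_range_latCoe_basis {ρ : ℕ} (e : Module.Basis (Fin ρ) ℤ (Fin ρ → ℤ)) :
    Submodule.span ℝ (Set.range fun i => latCoe (e i)) = ⊤ := by
  rw [eq_top_iff, ← (Pi.basisFun ℝ (Fin ρ)).span_eq, Submodule.span_le]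
  rintro _ ⟨j, rfl⟩
  have hj : Pi.basisFun ℝ (Fin ρ) j = latCoe (Pi.single j 1) := by
    funext k
    by_cases h : k = j <;> simp [latCoe, h]
  rw [hj, ← e.sum_repr (Pi.single j 1), latCoe_sum_zsmul]
  exact Submodule.sum_mem _ fun i _ => Submodule.smul_mem _ _ (Submodule.subset_span ⟨i, rfl⟩)

section Cube

variable {V ι : Type*} [AddCommGroup V] [Module ℝ V] [Fintype ι]

lemma Convex.add_sum_smul_mem_of_forall_sign {σ : Set V} (hσ : Convex ℝ σ) {x : V} {v : ι → V}
    (hvert : ∀ ε : ι → ℝ, (∀ i, ε i = 1 ∨ ε i = -1) → x + ∑ i, ε i • v i ∈ σ)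
    {s : ι → ℝ} (hs : ∀ i, |s i| ≤ 1) : x + ∑ i, s i • v i ∈ σ := by
  let T : Set (ι → ℝ) := Fintype.linearCombination ℝ v ⁻¹' ((x + ·) ⁻¹' σ)
  have hT : Convex ℝ T := (hσ.translate_preimage_right x).linear_preimage _
  have hcube : Set.univ.pi (fun _ => convexHull ℝ {(-1 : ℝ), 1}) ⊆ T := by
    rw [← convexHull_pi]
    refine convexHull_min (fun ε hε => ?_) hT
    simpa [T, Fintype.linearCombination_apply] using
      hvert ε fun i => by simpa [or_comm] using hε i (Set.mem_univ i)
  have hs' : s ∈ Set.univ.pi (fun _ => convexHull ℝ {(-1 : ℝ), 1}) := fun i _ => by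
    rw [convexHull_pair, segment_eq_Icc (by norm_num)]
    exact abs_le.mp (hs i)
  simpa [T, Fintype.linearCombination_apply] using hcube hs'

lemma sub_mem_and_sub_mem_of_mem_half_cube {σ : Set V} (hconv : Convex ℝ σ)
    (hcone : ∀ c : ℝ, 0 < c → ∀ x ∈ σ, c • x ∈ σ) {D' D'' : V} {v : ι → V}
    (hvert : ∀ ε : ι → ℝ, (∀ i, ε i = 1 ∨ ε i = -1) → D' - D'' + ∑ i, ε i • v i ∈ σ)
    {t : ι → ℝ} (ht : ∀ i, |t i| ≤ 1) :
    D' - (2⁻¹ : ℝ) • (D' + D'' + ∑ i, t i • v i) ∈ σ ∧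
      (2⁻¹ : ℝ) • (D' + D'' + ∑ i, t i • v i) - D'' ∈ σ := by
  constructor
  · have h := hcone 2⁻¹ (by norm_num) _ <|
      hconv.add_sum_smul_mem_of_forall_sign hvert (s := fun i => -t i) fun i => by
        simpa using ht i
    convert h using 1
    simp only [neg_smul, sum_neg_distrib]
    module
  · convert hcone 2⁻¹ (by norm_num) _ (hconv.add_sum_smul_mem_of_forall_sign hvert ht) using 1
    module

lemma exists_int_sum_smul_eq_half_add_cube (c : ι → ℝ) (v : ι → V) :
    ∃ n : ι → ℤ, ∃ t : ι → ℝ, (∀ i, |t i| ≤ 1) ∧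
      ∑ i, (n i : ℝ) • v i = (2⁻¹ : ℝ) • (∑ i, c i • v i + ∑ i, t i • v i) := by
  refine ⟨fun i => round (c i / 2), fun i => 2 * round (c i / 2) - c i, fun i => ?_, ?_⟩
  · have h := abs_sub_round (c i / 2)
    rw [abs_le] at h ⊢
    constructor <;> linarith [h.1, h.2]
  · rw [← sum_add_distrib, smul_sum]
    refine sum_congr rfl fun i _ => ?_
    module

end Cube

/-- Let `σ ⊆ ℝ^ρ` be a convex cone, `e` a `ℤ`-basis of the
lattice `ℤ^ρ`, and `C` the cube with vertices `±e 1 ± ⋯ ± e ρ`.  If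
`D' − D'' + v ∈ σ` for every vertex `v` of `C`, then `(D' − σ) ∩ (D'' + σ)`
contains a lattice point. -/
theorem stmt_3 (ρ : ℕ) (σ : Set (Fin ρ → ℝ))
    (hconv : Convex ℝ σ) (hcone : ∀ c : ℝ, 0 < c → ∀ x ∈ σ, c • x ∈ σ)
    (e : Module.Basis (Fin ρ) ℤ (Fin ρ → ℤ))
    (D' D'' : Fin ρ → ℝ)
    (hvert : ∀ ε : Fin ρ → ℤ, (∀ i, ε i = 1 ∨ ε i = -1) →
      D' - D'' + latCoe (∑ i, ε i • e i) ∈ σ) :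
    ∃ z : Fin ρ → ℤ, D' - latCoe z ∈ σ ∧ latCoe z - D'' ∈ σ := by
  have hspan : D' + D'' ∈ Submodule.span ℝ (Set.range fun i => latCoe (e i)) := by
    simp [span_range_latCoe_basis e]
  obtain ⟨c, hc⟩ := (Submodule.mem_span_range_iff_exists_fun ℝ).mp hspan
  obtain ⟨n, t, ht, hn⟩ := exists_int_sum_smul_eq_half_add_cube c fun i => latCoe (e i)
  refine ⟨∑ i, n i • e i, ?_⟩
  rw [latCoe_sum_zsmul, hn, hc]
  refine sub_mem_and_sub_mem_of_mem_half_cube hconv hcone (fun ε hε => ?_) ht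
  let η : Fin ρ → ℤ := fun i => if ε i = 1 then 1 else -1
  have hη : ∀ i, (η i = 1 ∨ η i = -1) ∧ (η i : ℝ) = ε i := fun i => by
    rcases hε i with h | h <;> norm_num [η, h]
  have h := hvert η fun i => (hη i).1
  rwa [latCoe_sum_zsmul, Fintype.sum_congr _ _ fun i => by rw [(hη i).2]] at h
end

section
/- Let C ⊆ ℙ² be the smooth plane quartic curve {x⁴ + y⁴ + y z³ = 0} over an algebraically closed field of characteristic ≠ 2, 3, let D = [0,0,1] ∈ C, a point of C. Then h⁰(C, 𝒪_C(4D)) = 3 and h⁰(C, 𝒪_C(5D)) = 3; consequently multiplication by the section defining D gives an isomorphism H⁰(𝒪_C(4D)) ≅ H⁰(𝒪_C(5D)), every global section of 𝒪_C(5D) vanishes at D, and 𝒪_C(5D) is not very ample, while 𝒪_C(4D) (the hyperplane class) is very ample. -/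
/-- Abstract model of the smooth plane quartic
`C = {x⁴ + y⁴ + yz³ = 0} ⊆ ℙ²` (genus `g = 3`, over an algebraically closed
field of characteristic `≠ 2, 3`) with the point `D = [0,0,1]`:
`h0 m = h⁰(C, 𝒪_C(mD))` and `VeryAmple m` means `𝒪_C(mD)` is very ample.
The hypotheses record: Riemann–Roch `h⁰(mD) − h⁰(K − mD) = m + 1 − g` with
canonical divisor `K = 4D` (adjunction) and `deg(mD) = m`; `h⁰ = 0` in negative
degrees; `h⁰(𝒪_C) = 1`; that the hyperplane class `𝒪_C(4D) = 𝒪_{ℙ²}(1)|_C`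
is very ample; and that a very ample `𝒪_C(mD)` has a section not vanishing at
`D` (sections vanishing at `D` form `H⁰((m−1)D)`), i.e. `h⁰((m−1)D) < h⁰(mD)`.
Conclusion: `h⁰(4D) = 3`, `h⁰(5D) = 3`, multiplication by the section defining
`D` is an isomorphism `H⁰(4D) ≅ H⁰(5D)` (equal dimensions), `𝒪_C(5D)` is not
very ample, while `𝒪_C(4D)` is very ample. -/
theorem stmt_6 (h0 : ℤ → ℕ) (VeryAmple : ℤ → Prop)
    (hRR : ∀ m : ℤ, (h0 m : ℤ) - (h0 (4 - m) : ℤ) = m + 1 - 3)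
    (hneg : ∀ m : ℤ, m < 0 → h0 m = 0)
    (h00 : h0 0 = 1)
    (hVA4 : VeryAmple 4)
    (hsep : ∀ m : ℤ, VeryAmple m → h0 (m - 1) < h0 m) :
    h0 4 = 3 ∧ h0 5 = 3 ∧ h0 4 = h0 5 ∧ ¬ VeryAmple 5 ∧ VeryAmple 4 := by
  have e4 := hRR 4
  have e5 := hRR 5
  have hn : h0 (4 - 5 : ℤ) = 0 := hneg _ (by norm_num)
  rw [show (4:ℤ)-4 = 0 by norm_num, h00] at e4
  rw [hn] at e5
  have h4 : h0 4 = 3 := by omega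
  have h5 : h0 5 = 3 := by omega
  refine ⟨h4, h5, by omega, fun hVA5 => ?_, hVA4⟩
  have := hsep 5 hVA5
  rw [show (5:ℤ)-1 = 4 by norm_num] at this
  omega
end

section
/- Let σ ⊆ ℝ^ρ be a closed pointed full-dimensional cone (to be thought of as Nef(X)), D₀ an interior point of σ, m(·) the associated minimum function m(E) = min{φ(E) : φ ∈ σ^∨ ∩ (H=1)} for a fixed H ∈ interior(σ), and e_1,…,e_ρ a basis of ℤ^ρ with cube vertices v = ±e_1 ± ⋯ ± e_ρ. Fix integers r ≥ 1 and d ≥ 2r, and let λ be an integer with λ ≥ 2d − r − 1 and λ ≥ (3d − r)/(d − r) − d(2d − r)·m(v)/((d − r)·m(D₀)) for every vertex v. Then for every Δ ∈ σ there exists a lattice point Δ₁ ∈ ℤ^ρ such that all three of the following lie in σ: (i) Δ₁; (ii) (λ − d − 1)·D₀ + Δ − d·Δ₁; (iii) (2d − r − λ − 1)·D₀ − Δ + (2d − r)·Δ₁. -/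
open Filter Topology

section Cone

variable {E : Type*} [AddCommGroup E] [Module ℝ E] [TopologicalSpace E]

theorem ProperCone.exists_coe_eq [ContinuousSMul ℝ E] {σ : Set E} (hclosed : IsClosed σ)
    (hconv : Convex ℝ σ) (hcone : ∀ c : ℝ, 0 < c → ∀ x ∈ σ, c • x ∈ σ) (hne : σ.Nonempty) :
    ∃ C : ProperCone ℝ E, (C : Set E) = σ := by
  let K : ConvexCone ℝ E :=
    { carrier := σ
      smul_mem' := fun c hc x hx => hcone c hc x hx
      add_mem' := fun x hx y hy => by
        have hmid := hconv hx hy (a := 1 / 2) (b := 1 / 2) (by norm_num) (by norm_num) (by norm_num)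
        simpa [smul_add, smul_smul] using hcone 2 two_pos _ hmid }
  lift K to ProperCone ℝ E using ⟨hne, hclosed⟩ with C hC
  exact ⟨C, congrArg SetLike.coe hC⟩

theorem exists_pos_add_smul_mem_of_mem_interior [ContinuousAdd E] [ContinuousSMul ℝ E]
    {s : Set E} {a : E} (ha : a ∈ interior s) (v : E) : ∃ t : ℝ, 0 < t ∧ a + t • v ∈ s := by
  have hcont : Tendsto (fun t : ℝ => a + t • v) (𝓝[>] 0) (𝓝 a) := by
    have : Continuous (fun t : ℝ => a + t • v) := by fun_prop
    simpa using (this.tendsto 0).mono_left nhdsWithin_le_nhds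
  exact ((hcont.eventually (mem_interior_iff_mem_nhds.1 ha)).and self_mem_nhdsWithin).exists.imp
    fun t ht => ⟨ht.2, ht.1⟩

theorem LinearMap.pos_of_mem_interior [ContinuousAdd E] [ContinuousSMul ℝ E] {s : Set E}
    {φ : E →ₗ[ℝ] ℝ} (hφ : ∀ y ∈ s, 0 ≤ φ y) {a z : E} (ha : a ∈ interior s) (hz : φ z < 0) :
    0 < φ a := by
  obtain ⟨t, ht, hmem⟩ := exists_pos_add_smul_mem_of_mem_interior ha z
  have := hφ _ hmem
  rw [map_add, map_smul, smul_eq_mul] at this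
  nlinarith

end Cone

def IsMinFunction {E : Type*} [AddCommGroup E] [Module ℝ E] (σ : Set E) (H : E) (m : E → ℝ) :
    Prop :=
  ∀ x, IsLeast {t : ℝ | ∃ φ : E →ₗ[ℝ] ℝ, (∀ y ∈ σ, 0 ≤ φ y) ∧ φ H = 1 ∧ t = φ x} (m x)

namespace IsMinFunction

variable {E : Type*} [AddCommGroup E] [Module ℝ E] {σ : Set E} {H : E} {m : E → ℝ}

theorem le_apply (hm : IsMinFunction σ H m) {φ : E →ₗ[ℝ] ℝ} (hφ : ∀ y ∈ σ, 0 ≤ φ y)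
    (hφH : φ H = 1) (x : E) : m x ≤ φ x :=
  (hm x).2 ⟨φ, hφ, hφH, rfl⟩

theorem add_le (hm : IsMinFunction σ H m) (a b : E) : m a + m b ≤ m (a + b) := by
  obtain ⟨φ, hφ, hφH, hab⟩ := (hm (a + b)).1
  rw [hab, map_add]
  exact add_le_add (hm.le_apply hφ hφH a) (hm.le_apply hφ hφH b)

theorem mul_le (hm : IsMinFunction σ H m) {c : ℝ} (hc : 0 ≤ c) (a : E) : c * m a ≤ m (c • a) := by
  obtain ⟨φ, hφ, hφH, hca⟩ := (hm (c • a)).1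
  rw [hca, map_smul, smul_eq_mul]
  exact mul_le_mul_of_nonneg_left (hm.le_apply hφ hφH a) hc

theorem add_neg_nonpos (hm : IsMinFunction σ H m) (a : E) : m a + m (-a) ≤ 0 := by
  obtain ⟨φ, hφ, hφH, ha⟩ := (hm a).1
  have := hm.le_apply hφ hφH (-a)
  rw [map_neg, ← ha] at this
  linarith

theorem pos_of_mem_interior [TopologicalSpace E] [ContinuousAdd E] [ContinuousSMul ℝ E]
    (hm : IsMinFunction σ H m) {D : E} (hD : D ∈ interior σ) : 0 < m D := by
  obtain ⟨φ, hφ, hφH, hmD⟩ := (hm D).1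
  rw [hmD]
  exact φ.pos_of_mem_interior hφ hD (z := -H) (by simp [hφH])

theorem mem_of_nonneg [TopologicalSpace E] [IsTopologicalAddGroup E] [ContinuousSMul ℝ E]
    [LocallyConvexSpace ℝ E] {C : ProperCone ℝ E} (hm : IsMinFunction C H m)
    (hH : H ∈ interior (C : Set E)) {x : E} (hx : 0 ≤ m x) : x ∈ C := by
  by_contra hxC
  obtain ⟨f, hf, hfx⟩ := C.hyperplane_separation_point hxC
  have hfH : 0 < f H := (f : E →ₗ[ℝ] ℝ).pos_of_mem_interior hf hH hfx
  have hψ := hm.le_apply (φ := (f H)⁻¹ • (f : E →ₗ[ℝ] ℝ))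
    (fun y hy => mul_nonneg (inv_nonneg.2 hfH.le) (hf y hy)) (inv_mul_cancel₀ hfH.ne') x
  have : (f H)⁻¹ * f x < 0 := mul_neg_of_pos_of_neg (inv_pos.2 hfH) hfx
  simp only [LinearMap.smul_apply, ContinuousLinearMap.coe_coe, smul_eq_mul] at hψ
  linarith

end IsMinFunction

theorem LinearMap.exists_sign_apply_le {ι : Type*} [Fintype ι]
    (φ : (ι → ℝ) →ₗ[ℝ] ℝ) {x : ι → ℝ} (hx : ∀ i, |x i| ≤ 1) :
    ∃ v : ι → ℝ, (∀ i, v i = 1 ∨ v i = -1) ∧ φ v ≤ φ x := by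
  classical
  let c : ι → ℝ := fun i => φ (fun j => if i = j then 1 else 0)
  refine ⟨fun i => if 0 ≤ c i then -1 else 1, fun i => by dsimp only; split_ifs <;> simp, ?_⟩
  rw [φ.pi_apply_eq_sum_univ, φ.pi_apply_eq_sum_univ]
  refine Finset.sum_le_sum fun i _ => ?_
  obtain ⟨hxl, hxu⟩ := abs_le.1 (hx i)
  simp only [smul_eq_mul]
  split_ifs <;> nlinarith

namespace IsMinFunction

variable {ι : Type*} [Fintype ι] {σ : Set (ι → ℝ)} {H : ι → ℝ} {m : (ι → ℝ) → ℝ}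

theorem exists_sign_le (hm : IsMinFunction σ H m) {x : ι → ℝ} (hx : ∀ i, |x i| ≤ 1) :
    ∃ v : ι → ℝ, (∀ i, v i = 1 ∨ v i = -1) ∧ m v ≤ m x := by
  obtain ⟨φ, hφ, hφH, hmx⟩ := (hm x).1
  obtain ⟨v, hv, hφv⟩ := φ.exists_sign_apply_le hx
  exact ⟨v, hv, hmx ▸ (hm.le_apply hφ hφH v).trans hφv⟩

theorem smul_add_mem {C : ProperCone ℝ (ι → ℝ)} (hm : IsMinFunction C H m)
    (hH : H ∈ interior (C : Set (ι → ℝ))) {D₀ : ι → ℝ} (hD₀ : 0 < m D₀) {α : ℝ}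
    (hvert : ∀ v : ι → ℝ, (∀ i, v i = 1 ∨ v i = -1) → 0 ≤ α * m D₀ + m v) :
    ∀ w : ι → ℝ, (∀ i, |w i| ≤ 1) → α • D₀ + w ∈ C := by
  have hα : 0 ≤ α := by
    have h₁ := hvert (fun _ => 1) fun _ => .inl rfl
    have h₂ := hvert (fun _ => -1) fun _ => .inr rfl
    have h₃ := hm.add_neg_nonpos fun _ => 1
    have : 0 ≤ α * m D₀ := by simp only [Pi.neg_def] at h₃; linarith
    exact nonneg_of_mul_nonneg_left this hD₀
  intro w hw
  obtain ⟨v, hv, hvw⟩ := hm.exists_sign_le hw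
  refine hm.mem_of_nonneg hH ?_
  linarith [hm.add_le (α • D₀) w, hm.mul_le hα D₀, hvert v hv]

end IsMinFunction

theorem nonneg_mul_add_of_div_sub_div_le {a b d r lam : ℝ} (ha : 0 < a) (hrd : r < d)
    (hd : 0 < d) (h : (3 * d - r) / (d - r) - d * (2 * d - r) * b / ((d - r) * a) ≤ lam) :
    0 ≤ ((d - r) * lam - 3 * d + r) / (d * (2 * d - r)) * a + b := by
  have hdr : 0 < d - r := sub_pos.2 hrd
  have hdN : 0 < d * (2 * d - r) := mul_pos hd (by linarith)
  rw [div_sub_div _ _ hdr.ne' (mul_pos hdr ha).ne', div_le_iff₀ (by positivity)] at h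
  rw [div_mul_eq_mul_div, div_add' _ _ _ hdN.ne']
  refine div_nonneg ?_ hdN.le
  nlinarith

theorem exists_lattice_point_of_cube_mem {ρ : ℕ} (C : ProperCone ℝ (Fin ρ → ℝ)) {D₀ Δ : Fin ρ → ℝ}
    (hD₀ : D₀ ∈ C) (hΔ : Δ ∈ C) {d r lam α : ℝ} (hd : 0 < d) (hrd : r < d)
    (hlam : 2 * d - r - 1 ≤ lam) (hα : α = ((d - r) * lam - 3 * d + r) / (d * (2 * d - r)))
    (hcube : ∀ w : Fin ρ → ℝ, (∀ i, |w i| ≤ 1) → α • D₀ + w ∈ C) :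
    ∃ Δ₁ : Fin ρ → ℤ, latCoe Δ₁ ∈ C ∧ (lam - d - 1) • D₀ + Δ - d • latCoe Δ₁ ∈ C ∧
      (2 * d - r - lam - 1) • D₀ - Δ + (2 * d - r) • latCoe Δ₁ ∈ C := by
  have hN : 0 < 2 * d - r := by linarith
  set p : Fin ρ → ℝ := ((lam - d - 1) / d - α / 2) • D₀ + d⁻¹ • Δ
  set Δ₁ : Fin ρ → ℤ := fun i => round (p i)
  set u : Fin ρ → ℝ := (2 : ℝ) • (latCoe Δ₁ - p)
  have hu : ∀ i, |u i| ≤ 1 := fun i => by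
    have := abs_sub_round (p i)
    simp only [u, Δ₁, latCoe, Pi.smul_apply, Pi.sub_apply, smul_eq_mul, abs_mul, abs_two]
    rw [abs_sub_comm]
    linarith
  have hplus := hcube u hu
  have hminus := hcube (-u) fun i => by simpa using hu i
  refine ⟨Δ₁, ?_, ?_, ?_⟩
  · have : latCoe Δ₁ = (1 / 2 : ℝ) • (α • D₀ + u) + d⁻¹ • Δ
        + ((lam + 1 - (2 * d - r)) / (2 * d - r)) • D₀ := by
      simp only [u, p, hα]
      match_scalars <;> field_simp <;> ring
    rw [this]
    refine C.add_mem (C.add_mem (C.smul_mem hplus (by norm_num)) (C.smul_mem hΔ (by positivity)))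
      (C.smul_mem hD₀ (div_nonneg (by linarith) hN.le))
  · have : (lam - d - 1) • D₀ + Δ - d • latCoe Δ₁ = (d / 2) • (α • D₀ + -u) := by
      simp only [u, p, hα]
      match_scalars <;> field_simp
      ring
    rw [this]
    exact C.smul_mem hminus (by positivity)
  · have : (2 * d - r - lam - 1) • D₀ - Δ + (2 * d - r) • latCoe Δ₁
        = ((2 * d - r) / 2) • (α • D₀ + u) + ((d - r) / d) • Δ := by
      simp only [u, p, hα]
      match_scalars <;> field_simp <;> ring
    rw [this]
    exact C.add_mem (C.smul_mem hplus (by positivity))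
      (C.smul_mem hΔ (div_nonneg (by linarith) hd.le))

theorem stmt_14_general (ρ : ℕ) (σ : Set (Fin ρ → ℝ))
    (hclosed : IsClosed σ) (hconv : Convex ℝ σ)
    (hcone : ∀ c : ℝ, 0 < c → ∀ x ∈ σ, c • x ∈ σ)
    (D₀ : Fin ρ → ℝ) (hD₀ : D₀ ∈ interior σ)
    (H : Fin ρ → ℝ) (hH : H ∈ interior σ)
    (m : (Fin ρ → ℝ) → ℝ)
    (hm : ∀ E : Fin ρ → ℝ, IsLeast {t : ℝ | ∃ φ : (Fin ρ → ℝ) →ₗ[ℝ] ℝ,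
      (∀ x ∈ σ, 0 ≤ φ x) ∧ φ H = 1 ∧ t = φ E} (m E))
    (r d lam : ℤ) (hr : 1 ≤ r) (hd : 2 * r ≤ d)
    (hlam1 : 2 * d - r - 1 ≤ lam)
    (hlam2 : ∀ v : Fin ρ → ℝ, (∀ i, v i = 1 ∨ v i = -1) →
      ((3 * d - r : ℤ) : ℝ) / ((d - r : ℤ) : ℝ) -
        ((d * (2 * d - r) : ℤ) : ℝ) * m v / (((d - r : ℤ) : ℝ) * m D₀)
        ≤ (lam : ℝ)) :
    ∀ Δ ∈ σ, ∃ Δ₁ : Fin ρ → ℤ,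
      latCoe Δ₁ ∈ σ ∧
      ((lam - d - 1 : ℤ) : ℝ) • D₀ + Δ - ((d : ℤ) : ℝ) • latCoe Δ₁ ∈ σ ∧
      ((2 * d - r - lam - 1 : ℤ) : ℝ) • D₀ - Δ + ((2 * d - r : ℤ) : ℝ) • latCoe Δ₁ ∈ σ := by
  intro Δ hΔ
  obtain ⟨C, rfl⟩ := ProperCone.exists_coe_eq hclosed hconv hcone ⟨D₀, interior_subset hD₀⟩
  have hmin : IsMinFunction (C : Set (Fin ρ → ℝ)) H m := hm
  have hmD₀ : 0 < m D₀ := hmin.pos_of_mem_interior hD₀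
  have hrd : (r : ℝ) < d := by exact_mod_cast (by omega : r < d)
  have hd₀ : (0 : ℝ) < d := by exact_mod_cast (by omega : 0 < d)
  have hcube := hmin.smul_add_mem hH hmD₀ fun v hv =>
    nonneg_mul_add_of_div_sub_div_le hmD₀ hrd hd₀ (by exact_mod_cast hlam2 v hv)
  obtain ⟨Δ₁, h₁, h₂, h₃⟩ := exists_lattice_point_of_cube_mem C (interior_subset hD₀) hΔ hd₀ hrd
    (by exact_mod_cast hlam1) rfl hcube
  exact ⟨Δ₁, h₁, by push_cast; exact h₂, by push_cast; exact h₃⟩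

/-- Let `σ ⊆ ℝ^ρ` be a closed pointed full-dimensional cone
(the nef cone), `D₀` an interior point of `σ`, and `m` the minimum function
`m(E) = min {φ(E) : φ ∈ σ^∨, φ(H) = 1}` for a fixed `H ∈ interior σ` (here
encoded by the `IsLeast` hypothesis `hm`).  The lattice is `ℤ^ρ` with its
standard basis, whose cube vertices are the vectors `v` with all coordinates
`±1`.  Fix integers `r ≥ 1`, `d ≥ 2r`, and `λ` with `λ ≥ 2d − r − 1` and
`λ ≥ (3d − r)/(d − r) − d(2d − r)·m(v)/((d − r)·m(D₀))` for every cube vertex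
`v`.  Then for every `Δ ∈ σ` there is a lattice point `Δ₁ ∈ ℤ^ρ` with:
(i) `Δ₁ ∈ σ`; (ii) `(λ − d − 1)·D₀ + Δ − d·Δ₁ ∈ σ`;
(iii) `(2d − r − λ − 1)·D₀ − Δ + (2d − r)·Δ₁ ∈ σ`. -/
theorem stmt_14 (ρ : ℕ) (σ : Set (Fin ρ → ℝ))
    (hclosed : IsClosed σ) (hconv : Convex ℝ σ)
    (hcone : ∀ c : ℝ, 0 < c → ∀ x ∈ σ, c • x ∈ σ)
    (hpointed : ∀ x ∈ σ, -x ∈ σ → x = 0)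
    (D₀ : Fin ρ → ℝ) (hD₀ : D₀ ∈ interior σ)
    (H : Fin ρ → ℝ) (hH : H ∈ interior σ)
    (m : (Fin ρ → ℝ) → ℝ)
    (hm : ∀ E : Fin ρ → ℝ, IsLeast {t : ℝ | ∃ φ : (Fin ρ → ℝ) →ₗ[ℝ] ℝ,
      (∀ x ∈ σ, 0 ≤ φ x) ∧ φ H = 1 ∧ t = φ E} (m E))
    (r d lam : ℤ) (hr : 1 ≤ r) (hd : 2 * r ≤ d)
    (hlam1 : 2 * d - r - 1 ≤ lam)
    (hlam2 : ∀ v : Fin ρ → ℝ, (∀ i, v i = 1 ∨ v i = -1) →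
      ((3 * d - r : ℤ) : ℝ) / ((d - r : ℤ) : ℝ) -
        ((d * (2 * d - r) : ℤ) : ℝ) * m v / (((d - r : ℤ) : ℝ) * m D₀)
        ≤ (lam : ℝ)) :
    ∀ Δ ∈ σ, ∃ Δ₁ : Fin ρ → ℤ,
      latCoe Δ₁ ∈ σ ∧
      ((lam - d - 1 : ℤ) : ℝ) • D₀ + Δ - ((d : ℤ) : ℝ) • latCoe Δ₁ ∈ σ ∧
      ((2 * d - r - lam - 1 : ℤ) : ℝ) • D₀ - Δ + ((2 * d - r : ℤ) : ℝ) • latCoe Δ₁ ∈ σ :=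
  stmt_14_general ρ σ hclosed hconv hcone D₀ hD₀ H hH m hm r d lam hr hd hlam1 hlam2
end
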